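/- Equivalence of the environment-based and substitution-based semantics: for any program P, (i) if P:[] ⇓ v in the environment-based semantics then P ⇓ F(v) in the substitution-based call-by-value semantics, and (ii) if P ⇓ w in the substitution-based semantics then there exists a value v' such that P:[] ⇓ v' in the environment-based semantics and F(v') = w. -/

import Mathlib

/- Untyped λ-expressions. -/
inductive Exp : Type
  | var : String → Exp
  | app : Exp → Exp → Exp
  | lam : String → Exp → Exp
deriving DecidableEq

namespace Exp

/-- Free variables. -/
def fv : Exp → Finset String
  | var x => {x}
  | app e1 e2 => fv e1 ∪ fv e2
  | lam x e => fv e \ {x}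

/-- The set of subexpressions of a λ-expression. -/
def subexp : Exp → Set Exp
  | var x => {var x}
  | app e1 e2 => insert (app e1 e2) (subexp e1 ∪ subexp e2)
  | lam x e => insert (lam x e) (subexp e)

end Exp

/- Values (closures), environments and states of the environment-based
semantics.  An environment is a (partial) map from variable names to values;
a state `e:ρ` pairs an expression with an environment. -/
inductive Val : Type
  | clos : String → Exp → (String → Option Val) → Val

abbrev Env := String → Option Val
abbrev State := Exp × Env

/-- A value `λx.e:ρ` viewed as a state. -/
def Val.toState : Val → State
  | .clos x e ρ => (Exp.lam x e, ρ)

/-- The λ-expression component of a value. -/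
def Val.toExp : Val → Exp
  | .clos x e _ => Exp.lam x e

def Env.update (ρ : Env) (x : String) (v : Val) : Env :=
  fun y => if y = x then some v else ρ y

def Env.empty : Env := fun _ => none

namespace Exp
/-- Substitution e[v/x].  (For closed `v`, as in CBV evaluation of programs,
this is capture-avoiding.) -/
def subst (v : Exp) (x : String) : Exp → Exp
  | var y => if y = x then v else var y
  | app e1 e2 => app (subst v x e1) (subst v x e2)
  | lam y e => if y = x then lam y e else lam y (subst v x e)
end Exp

/-- Call-by-value evaluation `e ⇓ v` (standard, substitution-based semantics). -/
inductive EvalS : Exp → Exp → Prop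
  | value (x : String) (e : Exp) : EvalS (Exp.lam x e) (Exp.lam x e)
  | apply {e1 e2 : Exp} {x : String} {e0 v2 v : Exp} :
      EvalS e1 (Exp.lam x e0) → EvalS e2 v2 → EvalS (Exp.subst v2 x e0) v →
      EvalS (Exp.app e1 e2) v

/- Environment-based evaluation `s ⇓ v`, with the three-premise (Apply) rule. -/
inductive EvalE : State → Val → Prop
  | value (x : String) (e : Exp) (ρ : Env) :
      EvalE (Exp.lam x e, ρ) (Val.clos x e ρ)
  | var {ρ : Env} {x : String} {v : Val} :
      ρ x = some v → EvalE (Exp.var x, ρ) v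
  | apply {e1 e2 : Exp} {ρ ρ0 : Env} {x : String} {e0 : Exp} {v2 v : Val} :
      EvalE (e1, ρ) (Val.clos x e0 ρ0) → EvalE (e2, ρ) v2 →
      EvalE (e0, Env.update ρ0 x v2) v →
      EvalE (Exp.app e1 e2, ρ) v

def Env.remove (ρ : Env) (x : String) : Env :=
  fun y => if y = x then none else ρ y

/-- The flattening function `F : State → Exp`,
`F(e:ρ) = e[F(ρ(x₁))/x₁, …, F(ρ(x_k))/x_k]` for `{x₁,…,x_k} = fv(e)`,
presented as a (functional) relation: `Flat e ρ t` means `F(e:ρ) = t`. -/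
inductive Flat : Exp → Env → Exp → Prop
  | varB {ρ : Env} {x y : String} {e : Exp} {ρ' : String → Option Val} {t : Exp} :
      ρ x = some (Val.clos y e ρ') → Flat (Exp.lam y e) ρ' t → Flat (Exp.var x) ρ t
  | varF {ρ : Env} {x : String} :
      ρ x = none → Flat (Exp.var x) ρ (Exp.var x)
  | app {ρ : Env} {e1 e2 t1 t2 : Exp} :
      Flat e1 ρ t1 → Flat e2 ρ t2 → Flat (Exp.app e1 e2) ρ (Exp.app t1 t2)
  | lam {ρ : Env} {x : String} {e t : Exp} :
      Flat e (Env.remove ρ x) t → Flat (Exp.lam x e) ρ (Exp.lam x t)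

/-
Both directions are inductions on the evaluation derivation, carrying along a flattening of the
current state. The (Apply) cases rest on the substitution lemma
`F(e : ρ[x ↦ v]) = F(e : ρ∖x)[F(v)/x]`, which holds because every value of a closed state flattens
to a closed term, so substituting for `x` never reaches inside an already flattened value.
-/

theorem Exp.subst_of_notMem_fv {x : String} {t : Exp} (h : x ∉ t.fv) (w : Exp) :
    Exp.subst w x t = t := by
  induction t with
  | var y =>
    have hyx : y ≠ x := fun hyx => h (by simp [Exp.fv, hyx])
    simp [Exp.subst, hyx]
  | app t₁ t₂ ih₁ ih₂ =>
    simp only [Exp.fv, Finset.mem_union, not_or] at h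
    simp [Exp.subst, ih₁ h.1, ih₂ h.2]
  | lam y t ih =>
    by_cases hyx : y = x
    · simp [Exp.subst, hyx]
    · have hx : x ∉ t.fv := fun hx => h (by simp [Exp.fv, hx, Ne.symm hyx])
      simp [Exp.subst, hyx, ih hx]

namespace Env

theorem remove_update_self (ρ : Env) (x : String) (v : Val) :
    (ρ.update x v).remove x = ρ.remove x := by
  funext z; simp only [remove, update]; split <;> rfl

theorem remove_remove_self (ρ : Env) (x : String) :
    (ρ.remove x).remove x = ρ.remove x := by
  funext z; simp only [remove]; split <;> simp_all

theorem remove_comm (ρ : Env) (x y : String) :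
    (ρ.remove x).remove y = (ρ.remove y).remove x := by
  funext z; simp only [remove]; split <;> split <;> simp_all

theorem remove_update_of_ne (ρ : Env) {x y : String} (h : y ≠ x) (v : Val) :
    (ρ.update x v).remove y = (ρ.remove y).update x v := by
  funext z; simp only [remove, update]
  by_cases hzy : z = y <;> by_cases hzx : z = x <;> simp_all

end Env

/- The paper's side condition `dom(ρ) ⊇ fv(e)` on states, which the type `State` does not carry,
imposed hereditarily: on a closure and on every value in its environment. -/
inductive Val.Closed : Val → Prop
  | clos {x : String} {e : Exp} {ρ : Env} :
      (∀ y u, ρ y = some u → u.Closed) → (∀ y ∈ (Exp.lam x e).fv, (ρ y).isSome) →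
      (Val.clos x e ρ).Closed

def Env.Closed (ρ : Env) : Prop :=
  ∀ y u, ρ y = some u → u.Closed

def State.Closed (s : State) : Prop :=
  Env.Closed s.2 ∧ ∀ y ∈ s.1.fv, (s.2 y).isSome

theorem Val.closed_clos_iff {x : String} {e : Exp} {ρ : Env} :
    (Val.clos x e ρ).Closed ↔ State.Closed (Exp.lam x e, ρ) :=
  ⟨fun ⟨hρ, hfv⟩ => ⟨hρ, hfv⟩, fun ⟨hρ, hfv⟩ => .clos hρ hfv⟩

namespace Env

theorem closed_empty : Env.Closed Env.empty := fun _ _ h => by cases h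

theorem Closed.remove {ρ : Env} (hρ : Env.Closed ρ) (x : String) : Env.Closed (ρ.remove x) := by
  intro y u hu
  by_cases hyx : y = x
  · simp [Env.remove, hyx] at hu
  · exact hρ y u (by simpa [Env.remove, hyx] using hu)

theorem Closed.update {ρ : Env} (hρ : Env.Closed ρ) (x : String) {v : Val} (hv : v.Closed) :
    Env.Closed (ρ.update x v) := by
  intro y u hu
  by_cases hyx : y = x
  · simp only [Env.update, hyx, if_true, Option.some.injEq] at hu
    exact hu ▸ hv
  · exact hρ y u (by simpa [Env.update, hyx] using hu)

end Env

namespace State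

theorem Closed.app_left {e₁ e₂ : Exp} {ρ : Env} (h : State.Closed (Exp.app e₁ e₂, ρ)) :
    State.Closed (e₁, ρ) :=
  ⟨h.1, fun y hy => h.2 y (by simp [Exp.fv, hy])⟩

theorem Closed.app_right {e₁ e₂ : Exp} {ρ : Env} (h : State.Closed (Exp.app e₁ e₂, ρ)) :
    State.Closed (e₂, ρ) :=
  ⟨h.1, fun y hy => h.2 y (by simp [Exp.fv, hy])⟩

end State

theorem Val.Closed.body_update {x : String} {e : Exp} {ρ : Env} {v : Val}
    (hc : (Val.clos x e ρ).Closed) (hv : v.Closed) : State.Closed (e, ρ.update x v) := by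
  obtain ⟨hρ, hfv⟩ := hc
  refine ⟨Env.Closed.update hρ x hv, fun y hy => ?_⟩
  by_cases hyx : y = x
  · simp [Env.update, hyx]
  · simpa [Env.update, hyx] using hfv y (by simp [Exp.fv, hy, hyx])

namespace Flat

theorem self_of_forall_fv_eq_none {e : Exp} {ρ : Env} (h : ∀ y ∈ e.fv, ρ y = none) : Flat e ρ e := by
  induction e generalizing ρ with
  | var x => exact .varF (h x (by simp [Exp.fv]))
  | app e₁ e₂ ih₁ ih₂ =>
    exact .app (ih₁ fun y hy => h y (by simp [Exp.fv, hy]))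
      (ih₂ fun y hy => h y (by simp [Exp.fv, hy]))
  | lam x e ih =>
    refine .lam (ih fun y hy => ?_)
    by_cases hyx : y = x
    · simp [Env.remove, hyx]
    · simpa [Env.remove, hyx] using h y (by simp [Exp.fv, hy, hyx])

theorem evalS_self_of_lam {x : String} {e t : Exp} {ρ : Env} (h : Flat (Exp.lam x e) ρ t) :
    EvalS t t := by
  cases h; exact .value _ _

theorem mem_fv {e t : Exp} {ρ : Env} (hf : Flat e ρ t) (hρ : Env.Closed ρ) {z : String}
    (hz : z ∈ t.fv) : z ∈ e.fv ∧ ρ z = none := by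
  induction hf generalizing z with
  | varB h _ ih =>
    obtain ⟨hρ', hfv⟩ := hρ _ _ h
    have hz' := ih hρ' hz
    simpa [hz'.2] using hfv z hz'.1
  | varF h =>
    simp only [Exp.fv, Finset.mem_singleton] at hz
    subst hz
    exact ⟨by simp [Exp.fv], h⟩
  | app _ _ ih₁ ih₂ =>
    simp only [Exp.fv, Finset.mem_union] at hz ⊢
    rcases hz with hz | hz
    · exact (ih₁ hρ hz).imp Or.inl id
    · exact (ih₂ hρ hz).imp Or.inr id
  | @lam ρ x e t _ ih =>
    simp only [Exp.fv, Finset.mem_sdiff, Finset.mem_singleton] at hz ⊢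
    obtain ⟨he, hρz⟩ := ih (hρ.remove x) hz.1
    exact ⟨⟨he, hz.2⟩, by simpa [Env.remove, hz.2] using hρz⟩

theorem fv_eq_empty_of_closed {v : Val} {w : Exp} (hv : v.Closed)
    (hf : Flat v.toState.1 v.toState.2 w) : w.fv = ∅ := by
  obtain ⟨hρ, hfv⟩ := hv
  refine Finset.eq_empty_of_forall_notMem fun z hz => ?_
  obtain ⟨he, hρz⟩ := hf.mem_fv hρ hz
  simp only [Val.toState] at he hρz
  simpa [hρz] using hfv z he

theorem update_subst {x : String} {v : Val} {w : Exp} (hvw : Flat v.toState.1 v.toState.2 w)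
    {e t : Exp} {ρ : Env} (hρ : Env.Closed ρ) (hf : Flat e (ρ.remove x) t) :
    Flat e (ρ.update x v) (Exp.subst w x t) := by
  induction e generalizing ρ t with
  | var y =>
    cases hf with
    | @varB _ _ a b ρ' _ h hin =>
      have hyx : y ≠ x := by rintro rfl; simp [Env.remove] at h
      have hρy : ρ y = some (.clos a b ρ') := by simpa [Env.remove, hyx] using h
      rw [Exp.subst_of_notMem_fv (by simp [fv_eq_empty_of_closed (hρ _ _ hρy) hin])]
      exact .varB (by simp [Env.update, hyx, hρy]) hin
    | varF h =>
      by_cases hyx : y = x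
      · subst hyx
        obtain ⟨a, b, ρv⟩ := v
        simp only [Exp.subst, if_true]
        exact .varB (by simp [Env.update, Val.toState]) hvw
      · have hρy : ρ y = none := by simpa [Env.remove, hyx] using h
        simpa [Exp.subst, hyx] using Flat.varF (by simp [Env.update, hyx, hρy])
  | app e₁ e₂ ih₁ ih₂ =>
    cases hf with
    | app h₁ h₂ => exact .app (ih₁ hρ h₁) (ih₂ hρ h₂)
  | lam y b ih =>
    cases hf with
    | lam h =>
      by_cases hyx : y = x
      · subst hyx
        rw [Env.remove_remove_self] at h
        simpa [Exp.subst] using Flat.lam (by rwa [Env.remove_update_self])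
      · rw [Env.remove_comm] at h
        simp only [Exp.subst, hyx, if_false]
        exact .lam (by rw [Env.remove_update_of_ne ρ hyx]; exact ih (hρ.remove y) h)

end Flat

theorem EvalE.sound {s : State} {v : Val} (h : EvalE s v) {t : Exp} (hf : Flat s.1 s.2 t)
    (hs : s.Closed) : v.Closed ∧ ∃ w, Flat v.toState.1 v.toState.2 w ∧ EvalS t w := by
  induction h generalizing t with
  | value x e ρ =>
    exact ⟨Val.closed_clos_iff.2 hs, t, hf, hf.evalS_self_of_lam⟩
  | var h =>
    cases hf with
    | varB h' hin =>
      cases h.symm.trans h'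
      exact ⟨hs.1 _ _ h, t, hin, hin.evalS_self_of_lam⟩
    | varF h' => simp [h] at h'
  | apply _ _ _ ih₁ ih₂ ih₃ =>
    cases hf with
    | app h₁ h₂ =>
      obtain ⟨hc₁, w₁, hfw₁, hev₁⟩ := ih₁ h₁ hs.app_left
      obtain ⟨hc₂, w₂, hfw₂, hev₂⟩ := ih₂ h₂ hs.app_right
      cases hfw₁ with
      | lam hbody =>
        obtain ⟨hc, w, hfw, hev⟩ :=
          ih₃ (hfw₂.update_subst (Val.closed_clos_iff.1 hc₁).1 hbody) (hc₁.body_update hc₂)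
        exact ⟨hc, w, hfw, .apply hev₁ hev₂ hev⟩

theorem EvalS.complete {t w : Exp} (h : EvalS t w) {e : Exp} {ρ : Env} (hf : Flat e ρ t)
    (hs : State.Closed (e, ρ)) :
    ∃ v : Val, EvalE (e, ρ) v ∧ v.Closed ∧ Flat v.toState.1 v.toState.2 w := by
  induction h generalizing e ρ with
  | value =>
    cases hf with
    | varB h hin => exact ⟨_, .var h, hs.1 _ _ h, hin⟩
    | lam h => exact ⟨_, .value _ _ _, Val.closed_clos_iff.2 hs, .lam h⟩
  | apply _ _ _ ih₁ ih₂ ih₃ =>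
    cases hf with
    | varB _ hin => cases hin
    | app h₁ h₂ =>
      obtain ⟨v₁, hev₁, hc₁, hfw₁⟩ := ih₁ h₁ hs.app_left
      obtain ⟨v₂, hev₂, hc₂, hfw₂⟩ := ih₂ h₂ hs.app_right
      obtain ⟨x, b, ρ₁⟩ := v₁
      cases hfw₁ with
      | lam hbody =>
        obtain ⟨v, hev, hc, hfw⟩ :=
          ih₃ (hfw₂.update_subst (Val.closed_clos_iff.1 hc₁).1 hbody) (hc₁.body_update hc₂)
        exact ⟨v, .apply hev₁ hev₂ hev, hc, hfw⟩

/-- Equivalence of the environment-based and substitution-based semantics: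
(i) `P:[] ⇓ v` implies `P ⇓ F(v)`, and (ii) `P ⇓ w` implies `P:[] ⇓ v'` for
some `v'` with `F(v') = w`. -/
theorem env_substitution_semantics_equivalent (P : Exp) (hP : P.fv = ∅) :
    (∀ v : Val, EvalE (P, Env.empty) v →
      ∃ w, Flat v.toState.1 v.toState.2 w ∧ EvalS P w) ∧
    (∀ w : Exp, EvalS P w →
      ∃ v : Val, EvalE (P, Env.empty) v ∧ Flat v.toState.1 v.toState.2 w) := by
  have hflat : Flat P Env.empty P := Flat.self_of_forall_fv_eq_none fun _ _ => rfl
  have hclosed : State.Closed (P, Env.empty) := ⟨Env.closed_empty, by simp [hP]⟩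
  refine ⟨fun v hv => (hv.sound hflat hclosed).2, fun w hw => ?_⟩
  obtain ⟨v, hev, -, hfw⟩ := hw.complete hflat hclosed
  exact ⟨v, hev, hfw⟩
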